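/- Let q be a prime power, n ≥ 2, h ≥ 1, and 1 ≤ i₀ ≤ n−1. Work over perfect 𝔽_q-algebras with W_h the h-truncated Witt vectors and σ the Witt-vector Frobenius. For x = (x₁,…,x_n) ∈ W_h(R)^n let g_n(x) be the matrix with columns σ^{j−1}(x), and let Y_{n,h} = {x : det g_n(x) ∈ W_h(R)^×}. For x ∈ Y_{n,h}(R) with x′ = (x_{i₀+1},…,x_n) satisfying det g_{n−i₀}(x′) ∈ W_h(R)^×, and m = (m_i(x))_{i=1}^{i₀} the vector of (n−i₀+1)×(n−i₀+1) minors of g_n(x) using rows i, i₀+1, …, n and the first n−i₀+1 columns, one has det g_{i₀}(m) ∈ W_h(R)^×. Moreover det g_{i₀}(m) = det g_n(x) · (det g_{n−i₀}(x′))^{Σ_{j=1}^{i₀−1} σ^j}. -/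

import Mathlib

/-- The `σ`-twisted Moore-type matrix of a vector `v`: its `j`-th column is
`σ^j` applied entrywise to `v`. -/
noncomputable def gmatW {S : Type*} [CommRing S] (σ : S →+* S) {r : ℕ}
    (v : Fin r → S) : Matrix (Fin r) (Fin r) S :=
  Matrix.of fun i j => (σ ^ (j : ℕ)) (v i)

/-- The vector of minors `m_i` of `gmatW σ x` with rows `i, i₀+1, …, n`
(1-indexed) and the first `n−i₀+1` columns. -/
noncomputable def minorVecW {S : Type*} [CommRing S] (σ : S →+* S) {n : ℕ}
    (i₀ : ℕ) (h : i₀ < n) (x : Fin n → S) : Fin i₀ → S := fun i =>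
  (gmatW σ (fun a : Fin (n - i₀ + 1) =>
    if (a : ℕ) = 0 then x ⟨(i : ℕ), lt_trans i.2 h⟩
    else x ⟨i₀ + (a : ℕ) - 1, by have := a.2; omega⟩)).det

/-! The minors `m_i` are the values `L(x_i)` of the `σ`-semilinear form
`L(w) = det g_{b+1}(w, x') = ∑_u c_u σ^u(w)`, where `b = n - i₀` and the `c_u` are the cofactors of
the first row, with `c_0 = σ(det g_b(x'))`. Replacing, for `j < i₀`, column `j` of `g_n(x)` by the
combination `∑_u σ^j(c_u) · (column j + u)` is right multiplication by a lower triangular matrix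
with diagonal `σ^{j+1}(det g_b(x'))`, and produces `σ^j(L(x_ρ))` in row `ρ`. These entries vanish
for the rows of `x'`, so the new matrix is block upper triangular with diagonal blocks `g_{i₀}(m)`
and `σ^{i₀}(g_b(x'))`. Comparing determinants and cancelling the unit `σ^{i₀}(det g_b(x'))` gives
the identity. -/

namespace GmatW

variable {S : Type*} [CommRing S] (σ : S →+* S)

theorem pow_add_apply (i j : ℕ) (s : S) : (σ ^ (i + j)) s = (σ ^ i) ((σ ^ j) s) := by
  rw [pow_add, RingHom.mul_def, RingHom.comp_apply]

theorem det_comp_cast {m n : ℕ} (h : m = n) (x : Fin n → S) :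
    (gmatW σ (x ∘ Fin.cast h)).det = (gmatW σ x).det := by
  subst h
  rfl

theorem det_append_split {a n : ℕ} (ha : a ≤ n) (x : Fin n → S) :
    (gmatW σ (Fin.append (fun i : Fin a => x ⟨i, by omega⟩)
      (fun k : Fin (n - a) => x ⟨a + k, by omega⟩))).det = (gmatW σ x).det := by
  rw [← det_comp_cast σ (Nat.add_sub_of_le ha) x]
  refine congrArg (fun v => (gmatW σ v).det)
    (funext fun t => Fin.addCases (fun i => ?_) (fun k => ?_) t)
  · rw [Fin.append_left]; rfl
  · rw [Fin.append_right]; rfl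

noncomputable def cofactor {b : ℕ} (z : Fin b → S) (u : Fin (b + 1)) : S :=
  (-1) ^ (u : ℕ) * (Matrix.of fun k v => (σ ^ (u.succAbove v : ℕ)) (z k)).det

theorem det_cons {b : ℕ} (w : S) (z : Fin b → S) :
    (gmatW σ (Fin.cons w z)).det = ∑ u : Fin (b + 1), (σ ^ (u : ℕ)) w * cofactor σ z u := by
  rw [Matrix.det_succ_row_zero]
  refine Finset.sum_congr rfl fun u _ => ?_
  have hminor : (gmatW σ (Fin.cons w z)).submatrix Fin.succ u.succAbove
      = Matrix.of fun k v => (σ ^ (u.succAbove v : ℕ)) (z k) := by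
    ext k v
    simp [gmatW]
  rw [hminor, cofactor]
  simp only [gmatW, Matrix.of_apply, Fin.cons_zero]
  ring

theorem det_cons_self {b : ℕ} (z : Fin b → S) (k : Fin b) :
    (gmatW σ (Fin.cons (z k) z)).det = 0 :=
  Matrix.det_zero_of_row_eq (Fin.succ_ne_zero k).symm (by ext; simp [gmatW])

theorem cofactor_zero {b : ℕ} (z : Fin b → S) : cofactor σ z 0 = σ (gmatW σ z).det := by
  have h : (Matrix.of fun k v => (σ ^ ((0 : Fin (b + 1)).succAbove v : ℕ)) (z k))
      = σ.mapMatrix (gmatW σ z) := by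
    ext k v
    simp [gmatW, pow_succ', RingHom.mul_def]
  rw [cofactor, h, ← RingHom.map_det]
  simp

noncomputable def transform (a : ℕ) {b : ℕ} (z : Fin b → S) :
    Matrix (Fin (a + b)) (Fin (a + b)) S :=
  Matrix.of fun t j =>
    if (j : ℕ) < a then
      ∑ u : Fin (b + 1), if (t : ℕ) = j + u then (σ ^ (j : ℕ)) (cofactor σ z u) else 0
    else (1 : Matrix (Fin (a + b)) (Fin (a + b)) S) t j

variable {a b : ℕ} (z : Fin b → S)

theorem mul_transform_of_lt (x : Fin (a + b) → S) (ρ j : Fin (a + b)) (hj : (j : ℕ) < a) :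
    (gmatW σ x * transform σ a z) ρ j = (σ ^ (j : ℕ)) (gmatW σ (Fin.cons (x ρ) z)).det := by
  simp only [Matrix.mul_apply, transform, Matrix.of_apply, if_pos hj, Finset.mul_sum, mul_ite,
    mul_zero]
  rw [Finset.sum_comm, det_cons, map_sum]
  refine Finset.sum_congr rfl fun u _ => ?_
  have hu := u.2
  rw [Finset.sum_eq_single ⟨j + u, by omega⟩ (fun t _ ht => if_neg fun h => ht (Fin.ext h))
    (by simp), if_pos rfl, map_mul, ← pow_add_apply]
  rfl

theorem mul_transform_of_ge (x : Fin (a + b) → S) (ρ j : Fin (a + b)) (hj : a ≤ (j : ℕ)) :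
    (gmatW σ x * transform σ a z) ρ j = (σ ^ (j : ℕ)) (x ρ) := by
  simp [Matrix.mul_apply, transform, hj.not_gt, Matrix.one_apply, gmatW]

theorem det_transform :
    (transform σ a z).det = ∏ j ∈ Finset.Icc 1 a, (σ ^ j) (gmatW σ z).det := by
  have hlower : (transform σ a z).IsLowerTriangular := by
    intro t j (htj : t < j)
    simp only [transform, Matrix.of_apply]
    split_ifs
    · exact Finset.sum_eq_zero fun u _ => if_neg (by have : (t : ℕ) < j := htj; omega)
    · exact Matrix.one_apply_ne htj.ne
  have hdiag_left (i : Fin a) : transform σ a z (Fin.castAdd b i) (Fin.castAdd b i) =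
      (σ ^ ((i : ℕ) + 1)) (gmatW σ z).det := by
    simp [transform, cofactor_zero, pow_add_apply]
  have hdiag_right (k : Fin b) : transform σ a z (Fin.natAdd a k) (Fin.natAdd a k) = 1 := by
    simp [transform]
  rw [Matrix.det_of_isLowerTriangular _ hlower, Fin.prod_univ_add]
  simp only [hdiag_left, hdiag_right, Finset.prod_const_one, mul_one]
  rw [Fin.prod_univ_eq_prod_range (fun i => (σ ^ (i + 1)) (gmatW σ z).det), Finset.range_eq_Ico,
    Finset.prod_Ico_add' (fun j => (σ ^ j) (gmatW σ z).det), zero_add,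
    Finset.Ico_add_one_right_eq_Icc]

theorem det_mul_transform (y : Fin a → S) :
    (gmatW σ (Fin.append y z) * transform σ a z).det =
      (gmatW σ fun i => (gmatW σ (Fin.cons (y i) z)).det).det * (σ ^ a) (gmatW σ z).det := by
  have hblocks : (gmatW σ (Fin.append y z) * transform σ a z).submatrix finSumFinEquiv
      finSumFinEquiv = Matrix.fromBlocks (gmatW σ fun i => (gmatW σ (Fin.cons (y i) z)).det)
        (Matrix.of fun i k =>
          (gmatW σ (Fin.append y z) * transform σ a z) (Fin.castAdd b i) (Fin.natAdd a k))
        0 ((σ ^ a).mapMatrix (gmatW σ z)) := by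
    ext (i | k) (j | l)
    · rw [Matrix.submatrix_apply, finSumFinEquiv_apply_left, finSumFinEquiv_apply_left,
        mul_transform_of_lt σ z _ _ _ j.2, Fin.append_left]
      rfl
    · rfl
    · rw [Matrix.submatrix_apply, finSumFinEquiv_apply_right, finSumFinEquiv_apply_left,
        mul_transform_of_lt σ z _ _ _ j.2, Fin.append_right, det_cons_self, map_zero]
      rfl
    · rw [Matrix.submatrix_apply, finSumFinEquiv_apply_right, finSumFinEquiv_apply_right,
        mul_transform_of_ge σ z _ _ (Fin.natAdd a l) (Nat.le_add_right a l), Fin.append_right,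
        Fin.val_natAdd, pow_add_apply]
      rfl
  rw [← Matrix.det_submatrix_equiv_self finSumFinEquiv, hblocks, Matrix.det_fromBlocks_zero₂₁,
    RingHom.map_det]

theorem det_minors_mul (y : Fin a → S) :
    (gmatW σ fun i => (gmatW σ (Fin.cons (y i) z)).det).det * (σ ^ a) (gmatW σ z).det =
      (gmatW σ (Fin.append y z)).det * ∏ j ∈ Finset.Icc 1 a, (σ ^ j) (gmatW σ z).det := by
  rw [← det_mul_transform, Matrix.det_mul, det_transform]

theorem det_minors_eq (y : Fin (a + 1) → S) (hz : IsUnit (gmatW σ z).det) :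
    (gmatW σ fun i => (gmatW σ (Fin.cons (y i) z)).det).det =
      (gmatW σ (Fin.append y z)).det * ∏ j ∈ Finset.Icc 1 a, (σ ^ j) (gmatW σ z).det := by
  have h := det_minors_mul σ z y
  rw [Finset.prod_Icc_succ_top (Nat.le_add_left 1 a), ← mul_assoc] at h
  exact (hz.map (σ ^ (a + 1))).mul_right_cancel h

end GmatW

theorem minorVecW_eq {S : Type*} [CommRing S] (σ : S →+* S) {n : ℕ} (i₀ : ℕ) (h : i₀ < n)
    (x : Fin n → S) :
    minorVecW σ i₀ h x = fun i : Fin i₀ => (gmatW σ (Fin.cons (x ⟨i, i.2.trans h⟩)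
      (fun k : Fin (n - i₀) => x ⟨i₀ + k, by omega⟩))).det := by
  funext i
  exact congrArg (fun v => (gmatW σ v).det)
    (funext fun u => Fin.cases (by simp) (fun v => by simp) u)

theorem witt_det_minor_identity
    (p : ℕ) [hp : Fact p.Prime]
    (R : Type*) [CommRing R]
    (n i₀ h : ℕ) (h1 : 1 ≤ i₀) (hi₀ : i₀ < n)
    (σ : TruncatedWittVector p h R →+* TruncatedWittVector p h R)
    (x : Fin n → TruncatedWittVector p h R)
    (hx : IsUnit (gmatW σ x).det)
    (hx' : IsUnit ((gmatW σ (fun k : Fin (n - i₀) =>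
        x ⟨i₀ + (k : ℕ), by have := k.2; omega⟩)).det)) :
    IsUnit (gmatW σ (minorVecW σ i₀ hi₀ x)).det ∧
    (gmatW σ (minorVecW σ i₀ hi₀ x)).det =
      (gmatW σ x).det *
        ∏ j ∈ Finset.Icc 1 (i₀ - 1),
          (σ ^ j) ((gmatW σ (fun k : Fin (n - i₀) =>
            x ⟨i₀ + (k : ℕ), by have := k.2; omega⟩)).det) := by
  obtain ⟨i₀, rfl⟩ : ∃ i, i₀ = i + 1 := ⟨i₀ - 1, by omega⟩
  have hdet := GmatW.det_minors_eq σ _ (fun i : Fin (i₀ + 1) => x ⟨i, by omega⟩) hx'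
  rw [GmatW.det_append_split σ hi₀.le x, ← minorVecW_eq σ _ hi₀] at hdet
  rw [Nat.add_sub_cancel]
  exact ⟨hdet ▸ hx.mul (IsUnit.prod_iff.mpr fun j _ => hx'.map _), hdet⟩
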